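/- arXiv:2103.06013 — 3 statements merged into one kernel-verified Lean document; each statement's English description precedes it below -/
import Mathlib

section
/- Let (λ_n) be a strictly increasing sequence of positive reals tending to infinity, and let (r_n) be a real sequence with ∑ |r_n| < ∞. Suppose (κ_m) is a sequence of reals tending to infinity such that ∑_n r_n / λ_n^{κ_m} = 0 for all m. Then r_n = 0 for all n. -/
set_option maxHeartbeats 1000000


theorem vanishing_dirichlet_series (lam : ℕ → ℝ) (r : ℕ → ℝ) (κ : ℕ → ℝ)
    (hpos : ∀ n, 0 < lam n) (hmono : StrictMono lam)
    (htop : Filter.Tendsto lam Filter.atTop Filter.atTop)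
    (hr : Summable fun n => |r n|)
    (hκ : Filter.Tendsto κ Filter.atTop Filter.atTop)
    (hsum : ∀ m, Summable fun n => |r n / lam n ^ κ m|)
    (hzero : ∀ m, ∑' n, r n / lam n ^ κ m = 0) :
    ∀ n, r n = 0 := by
  intro n
  induction n using Nat.strong_induction_on with
  | _ n ih =>
  set q : ℝ := lam n / lam (n + 1) with hqdef
  have hq0 : 0 < q := div_pos (hpos n) (hpos (n + 1))
  have hq1 : q < 1 := (div_lt_one (hpos (n + 1))).2 (hmono (Nat.lt_succ_self n))
  set C : ℝ := ∑' k, |r k| with hCdef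
  -- key bound for each m with κ m ≥ 0
  have key : ∀ m, 0 ≤ κ m → |r n| ≤ q ^ κ m * C := by
    intro m hm
    set f : ℕ → ℝ := fun k => r k * (lam n / lam k) ^ κ m with hfdef
    have hfeq : f = fun k => (r k / lam k ^ κ m) * lam n ^ κ m := by
      funext k
      show r k * (lam n / lam k) ^ κ m = _
      rw [Real.div_rpow (hpos n).le (hpos k).le]
      ring
    have hs1 : Summable (fun k => r k / lam k ^ κ m) := (hsum m).of_abs
    have hf : Summable f := by rw [hfeq]; exact hs1.mul_right _
    have htsum0 : ∑' k, f k = 0 := by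
      rw [hfeq, tsum_mul_right, hzero m, zero_mul]
    have hfn : f n = r n := by
      rw [hfdef]
      simp [div_self (hpos n).ne', Real.one_rpow]
    have hsplit := Summable.tsum_eq_add_tsum_ite hf n
    rw [htsum0, hfn] at hsplit
    have hrn : r n = - ∑' k, (if k = n then 0 else f k) := by linarith
    -- summability of the ite function
    have hfite : Summable (fun k => if k = n then 0 else f k) := by
      apply hf.summable_of_eq_zero_or_self
      intro k
      by_cases hk : k = n <;> simp [hk]
    -- pointwise bound
    have hbound : ∀ k, |if k = n then 0 else f k| ≤ |r k| * q ^ κ m := by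
      intro k
      by_cases hk : k = n
      · subst hk
        rw [if_pos rfl, abs_zero]
        exact mul_nonneg (abs_nonneg _) (Real.rpow_nonneg hq0.le _)
      · rw [if_neg hk]
        rcases lt_or_gt_of_ne hk with hlt | hgt
        · rw [hfdef]
          simp [ih k hlt]
        · rw [hfdef]
          have hkn1 : lam (n + 1) ≤ lam k := hmono.monotone hgt
          have h1 : lam n / lam k ≤ q := by
            rw [hqdef]
            exact div_le_div_of_nonneg_left (hpos n).le (hpos (n + 1)) hkn1
          have h2 : (lam n / lam k) ^ κ m ≤ q ^ κ m :=
            Real.rpow_le_rpow (div_pos (hpos n) (hpos k)).le h1 hm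
          have h3 : (0:ℝ) ≤ (lam n / lam k) ^ κ m :=
            Real.rpow_nonneg (div_pos (hpos n) (hpos k)).le _
          calc |r k * (lam n / lam k) ^ κ m| = |r k| * (lam n / lam k) ^ κ m := by
                rw [abs_mul, abs_of_nonneg h3]
            _ ≤ |r k| * q ^ κ m := by
                exact mul_le_mul_of_nonneg_left h2 (abs_nonneg _)
    have hRHS : Summable (fun k => |r k| * q ^ κ m) := hr.mul_right _
    calc |r n| = |∑' k, (if k = n then 0 else f k)| := by rw [hrn, abs_neg]
      _ ≤ ∑' k, |if k = n then 0 else f k| := by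
          simpa [Real.norm_eq_abs] using
            norm_tsum_le_tsum_norm (f := fun k => if k = n then 0 else f k)
              (by simpa [Real.norm_eq_abs] using hfite.abs)
      _ ≤ ∑' k, |r k| * q ^ κ m := by
          exact Summable.tsum_le_tsum hbound hfite.abs hRHS
      _ = q ^ κ m * C := by rw [tsum_mul_right, hCdef, mul_comm]
  -- take the limit
  have hlim : Filter.Tendsto (fun m => q ^ κ m * C) Filter.atTop (nhds 0) := by
    have h1 : Filter.Tendsto (fun x : ℝ => q ^ x) Filter.atTop (nhds 0) :=
      tendsto_rpow_atTop_of_base_lt_one q (by linarith) hq1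
    have := (h1.comp hκ).mul_const C
    simpa using this
  have hev : ∀ᶠ m in Filter.atTop, |r n| ≤ q ^ κ m * C := by
    filter_upwards [hκ.eventually_ge_atTop 0] with m hm
    exact key m hm
  have : |r n| ≤ 0 := ge_of_tendsto hlim hev
  exact abs_eq_zero.1 (le_antisymm this (abs_nonneg _))
end

section
/- Let (λ_n) be a strictly increasing sequence of positive reals, and let u(t) = ∑_n a_n e^{−λ_n t} with ∑ |a_n| < ∞. If for every τ > 0 there is C_τ > 0 with |u(t)| ≤ C_τ e^{−τ t} for all large t, then a_n = 0 for all n. -/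
theorem exp_series_superexponential_decay (lam : ℕ → ℝ) (a : ℕ → ℝ) (u : ℝ → ℝ)
    (hpos : 0 < lam 0) (hmono : StrictMono lam)
    (ha : Summable fun n => |a n|)
    (hu : ∀ t : ℝ, 0 < t → u t = ∑' n, a n * Real.exp (-lam n * t))
    (hdecay : ∀ τ : ℝ, 0 < τ → ∃ C > 0, ∃ T : ℝ, ∀ t ≥ T, |u t| ≤ C * Real.exp (-τ * t)) :
    ∀ n, a n = 0 := by
  intro n
  induction n using Nat.strong_induction_on with
  | _ n ih =>
  set δ : ℝ := lam (n + 1) - lam n with hδdef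
  have hδ : 0 < δ := sub_pos.mpr (hmono (Nat.lt_succ_self n))
  set A : ℝ := ∑' k, |a k| with hAdef
  have hlamn : 0 < lam n := lt_of_lt_of_le hpos (hmono.monotone (Nat.zero_le n))
  obtain ⟨C, hC, T, hT⟩ := hdecay (lam n + 1) (by linarith)
  have key : ∀ t : ℝ, 0 < t →
      |a n| ≤ |u t| * Real.exp (lam n * t) + A * Real.exp (-δ * t) := by
    intro t ht
    set g : ℕ → ℝ := fun k => a k * Real.exp ((lam n - lam k) * t) with hgdef
    have hgabs : ∀ k, |g k| ≤ |a k| := by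
      intro k
      rcases lt_or_ge k n with hk | hk
      · simp [hgdef, ih k hk]
      · have h1 : (lam n - lam k) * t ≤ 0 := by
          have := hmono.monotone hk
          nlinarith
        have h2 : Real.exp ((lam n - lam k) * t) ≤ 1 := Real.exp_le_one_iff.mpr h1
        have h3 : (0:ℝ) < Real.exp ((lam n - lam k) * t) := Real.exp_pos _
        rw [hgdef, abs_mul, Real.abs_exp]
        nlinarith [abs_nonneg (a k)]
    have hg2 : Summable g :=
      Summable.of_abs (ha.of_nonneg_of_le (fun k => abs_nonneg _) hgabs)
    have h1 : u t * Real.exp (lam n * t) = ∑' k, g k := by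
      rw [hu t ht, ← tsum_mul_right]
      congr 1; funext k
      rw [hgdef, mul_assoc, ← Real.exp_add]
      ring_nf
    have h3 := Summable.tsum_eq_add_tsum_ite hg2 n
    have hgn : g n = a n := by simp [hgdef]
    set S : ℝ := ∑' k, if k = n then 0 else g k with hSdef
    have han : a n = u t * Real.exp (lam n * t) - S := by
      rw [h1, h3, hgn]; ring
    -- bound on S
    have hb : ∀ k, |if k = n then 0 else g k| ≤ |a k| * Real.exp (-δ * t) := by
      intro k
      rcases eq_or_ne k n with hk | hk
      · simp [hk]; positivity
      · rw [if_neg hk]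
        rcases lt_or_ge k n with hk2 | hk2
        · simp [hgdef, ih k hk2]
        · have hk3 : n + 1 ≤ k := lt_of_le_of_ne hk2 (Ne.symm hk)
          have hlk : lam (n + 1) ≤ lam k := hmono.monotone hk3
          have hexp : Real.exp ((lam n - lam k) * t) ≤ Real.exp (-δ * t) := by
            apply Real.exp_le_exp.mpr
            nlinarith
          rw [hgdef, abs_mul, Real.abs_exp]
          have := abs_nonneg (a k)
          nlinarith [Real.exp_pos ((lam n - lam k) * t)]
    have hbsum : Summable (fun k => |a k| * Real.exp (-δ * t)) := ha.mul_right _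
    have hfsum : Summable (fun k => if k = n then 0 else g k) := by
      apply Summable.of_abs
      exact hbsum.of_nonneg_of_le (fun k => abs_nonneg _) hb
    have hS : |S| ≤ A * Real.exp (-δ * t) := by
      calc |S| ≤ ∑' k, |if k = n then 0 else g k| := by
            simpa using norm_tsum_le_tsum_norm (f := fun k => if k = n then 0 else g k)
              (by simpa [Real.norm_eq_abs] using hfsum.abs)
        _ ≤ ∑' k, |a k| * Real.exp (-δ * t) := Summable.tsum_le_tsum hb hfsum.abs hbsum
        _ = A * Real.exp (-δ * t) := by rw [hAdef, tsum_mul_right]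
    calc |a n| = |u t * Real.exp (lam n * t) - S| := by rw [han]
      _ ≤ |u t * Real.exp (lam n * t)| + |S| := abs_sub _ _
      _ ≤ |u t| * Real.exp (lam n * t) + A * Real.exp (-δ * t) := by
          rw [abs_mul, Real.abs_exp]; linarith
  -- take t → ∞
  have hlim : Filter.Tendsto (fun t : ℝ => C * Real.exp (-t) + A * Real.exp (-δ * t))
      Filter.atTop (nhds 0) := by
    have h1 : Filter.Tendsto (fun t : ℝ => Real.exp (-t)) Filter.atTop (nhds 0) :=
      Real.tendsto_exp_neg_atTop_nhds_zero
    have h2 : Filter.Tendsto (fun t : ℝ => Real.exp (-δ * t)) Filter.atTop (nhds 0) := by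
      have hb : Filter.Tendsto (fun t : ℝ => -δ * t) Filter.atTop Filter.atBot :=
        (Filter.tendsto_const_mul_atBot_of_neg (by linarith : -δ < 0)).mpr Filter.tendsto_id
      exact Real.tendsto_exp_comp_nhds_zero.mpr hb
    simpa using (h1.const_mul C).add (h2.const_mul A)
  have hle : |a n| ≤ 0 := by
    apply ge_of_tendsto hlim
    filter_upwards [Filter.eventually_ge_atTop (max T 1)] with t ht
    have hT1 : T ≤ t := le_trans (le_max_left _ _) ht
    have ht1 : (1:ℝ) ≤ t := le_trans (le_max_right _ _) ht
    have htpos : 0 < t := by linarith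
    calc |a n| ≤ |u t| * Real.exp (lam n * t) + A * Real.exp (-δ * t) := key t htpos
      _ ≤ C * Real.exp (-(lam n + 1) * t) * Real.exp (lam n * t) + A * Real.exp (-δ * t) := by
          gcongr
          exact hT t hT1
      _ = C * Real.exp (-t) + A * Real.exp (-δ * t) := by
          rw [mul_assoc, ← Real.exp_add]
          ring_nf
  exact abs_eq_zero.mp (le_antisymm hle (abs_nonneg _))
end

section
/- Let 0 < λ_1 < λ_2 < ⋯ with λ_n → ∞, and let (c_n) satisfy ∑ c_n² < ∞. Define u(t) with coefficients c_n E_{α,1}(−λ_n t^α) for 0 < α < 1, in the ℓ² sense. Then there is a constant C > 0 (depending on t₀ and λ_1) such that (∑_n λ_n² |c_n E_{α,1}(−λ_n t^α)|²)^{1/2} ≤ C t^{−α} (∑ c_n²)^{1/2} for all t ≥ t₀ > 0. -/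
theorem weighted_l2_decay_estimate (α t₀ C₀ : ℝ) (hα0 : 0 < α) (hα1 : α < 1)
    (ht₀ : 0 < t₀) (hC₀ : 0 < C₀)
    (lam : ℕ → ℝ) (c : ℕ → ℝ) (E : ℝ → ℝ)
    (hpos : ∀ n, 0 < lam n) (hmono : StrictMono lam)
    (hc : Summable fun n => (c n) ^ 2)
    (hE : ∀ η : ℝ, 0 < η → |E (-η)| ≤ C₀ / (1 + η)) :
    ∃ C > 0, ∀ t ≥ t₀,
      Real.sqrt (∑' n, (lam n) ^ 2 * (c n * E (-(lam n * t ^ α))) ^ 2)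
        ≤ C * t ^ (-α) * Real.sqrt (∑' n, (c n) ^ 2) := by
  refine ⟨C₀, hC₀, fun t ht => ?_⟩
  have ht0 : 0 < t := lt_of_lt_of_le ht₀ ht
  have hs : 0 < t ^ α := Real.rpow_pos_of_pos ht0 α
  have hK : 0 < C₀ * t ^ (-α) := mul_pos hC₀ (Real.rpow_pos_of_pos ht0 _)
  have hKeq : C₀ * t ^ (-α) = C₀ / t ^ α := by
    rw [Real.rpow_neg ht0.le, div_eq_mul_inv]
  have key : ∀ n, (lam n) ^ 2 * (c n * E (-(lam n * t ^ α))) ^ 2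
      ≤ (C₀ * t ^ (-α)) ^ 2 * (c n) ^ 2 := by
    intro n
    have hη : 0 < lam n * t ^ α := mul_pos (hpos n) hs
    have hEn := hE _ hη
    have h1 : lam n * |E (-(lam n * t ^ α))| ≤ C₀ / t ^ α := by
      calc lam n * |E (-(lam n * t ^ α))| ≤ lam n * (C₀ / (1 + lam n * t ^ α)) :=
            mul_le_mul_of_nonneg_left hEn (le_of_lt (hpos n))
        _ ≤ C₀ / t ^ α := by
            rw [mul_div_assoc', div_le_div_iff₀ (by positivity) hs]
            nlinarith [hpos n, hs, hC₀]
    have h0 : 0 ≤ lam n * |E (-(lam n * t ^ α))| :=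
      mul_nonneg (hpos n).le (abs_nonneg _)
    have h2 : (lam n * |E (-(lam n * t ^ α))|) ^ 2 ≤ (C₀ / t ^ α) ^ 2 :=
      pow_le_pow_left₀ h0 h1 2
    have h3 : (lam n * |E (-(lam n * t ^ α))|) ^ 2
        = (lam n) ^ 2 * (E (-(lam n * t ^ α))) ^ 2 := by
      rw [mul_pow, sq_abs]
    rw [hKeq]
    nlinarith [sq_nonneg (c n), h2, h3]
  have hsum2 : Summable (fun n => (C₀ * t ^ (-α)) ^ 2 * (c n) ^ 2) := hc.mul_left _
  have hsum1 : Summable (fun n => (lam n) ^ 2 * (c n * E (-(lam n * t ^ α))) ^ 2) :=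
    Summable.of_nonneg_of_le (fun n => by positivity) key hsum2
  have hle := Summable.tsum_le_tsum key hsum1 hsum2
  rw [tsum_mul_left] at hle
  calc Real.sqrt (∑' n, (lam n) ^ 2 * (c n * E (-(lam n * t ^ α))) ^ 2)
      ≤ Real.sqrt ((C₀ * t ^ (-α)) ^ 2 * ∑' n, (c n) ^ 2) := Real.sqrt_le_sqrt hle
    _ = C₀ * t ^ (-α) * Real.sqrt (∑' n, (c n) ^ 2) := by
        rw [Real.sqrt_mul (sq_nonneg _), Real.sqrt_sq hK.le]
end
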